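/- Let $H$ be a connected solvable spherical subgroup of $G$ standardly embedded in $B$, and let $\alpha$ be an active root. Then: (a) $|F(\alpha)| = |\mathrm{Supp}(\alpha)|$; (b) the restricted weights $\tau(\beta)$ for $\beta \in F(\alpha)$ are linearly independent; (c) the linear span of $F(\alpha)$ equals the linear span of $\mathrm{Supp}(\alpha)$. -/

import Mathlib

open scoped InnerProductSpace

/-- A reduced crystallographic root system in a Euclidean space `V`, together with a chosen
base of simple roots and the (integer) coordinates of each root in this base. -/
structure RootSystemData (V : Type) [NormedAddCommGroup V] [InnerProductSpace ℝ V] where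
  /-- the set of roots -/
  roots : Set V
  /-- the set of simple roots (the base) -/
  simples : Finset V
  finite : roots.Finite
  ne_zero : ∀ α ∈ roots, α ≠ (0 : V)
  neg_mem : ∀ α ∈ roots, -α ∈ roots
  reduced : ∀ α ∈ roots, (2 : ℝ) • α ∉ roots
  reflect_mem : ∀ α ∈ roots, ∀ β ∈ roots,
    β - (2 * ⟪α, β⟫_ℝ / ⟪α, α⟫_ℝ) • α ∈ roots
  cartan_int : ∀ α ∈ roots, ∀ β ∈ roots, ∃ n : ℤ,
    2 * ⟪α, β⟫_ℝ / ⟪α, α⟫_ℝ = (n : ℝ)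
  simples_mem : ∀ γ ∈ simples, γ ∈ roots
  simples_indep : LinearIndependent ℝ (fun γ : simples => (γ : V))
  /-- `coeff α γ` is the coefficient of the simple root `γ` in the root `α` -/
  coeff : V → V → ℤ
  coeff_spec : ∀ α ∈ roots, α = ∑ γ ∈ simples, coeff α γ • γ
  coeff_sign : ∀ α ∈ roots,
    (∀ γ ∈ simples, 0 ≤ coeff α γ) ∨ (∀ γ ∈ simples, coeff α γ ≤ 0)

namespace RootSystemData

variable {V : Type} [NormedAddCommGroup V] [InnerProductSpace ℝ V]

/-- The set of positive roots with respect to the base. -/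
def pos (R : RootSystemData V) : Set V :=
  {α ∈ R.roots | ∀ γ ∈ R.simples, 0 ≤ R.coeff α γ}

/-- The support of a root: the simple roots occurring in it with nonzero coefficient. -/
def Supp (R : RootSystemData V) (α : V) : Finset V :=
  R.simples.filter fun γ => R.coeff α γ ≠ 0

/-- The height of a root: the sum of its coefficients over the simple roots. -/
def height (R : RootSystemData V) (α : V) : ℤ :=
  ∑ γ ∈ R.simples, R.coeff α γ

/-- `s(α)`: the number of unordered representations of `α` as a sum of two positive
roots. -/
noncomputable def numDecomp (R : RootSystemData V) (α : V) : ℕ :=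
  {z : Sym2 V | ∃ β ∈ R.pos, ∃ γ ∈ R.pos, z = Sym2.mk β γ ∧ β + γ = α}.ncard

end RootSystemData

/-- The Lie-theoretic data attached to a connected solvable subgroup `H = S ⋉ N` of a
connected semisimple complex algebraic group `G`, standardly embedded in a Borel subgroup
`B = T ⋉ U`:
* the root system of `G` with respect to `T`, with the base determined by `B`;
* the restriction map `τ : 𝔛(T) ⊗ ℚ → 𝔛(S) ⊗ ℚ` of characters from `T` to the maximal
  torus `S = H ∩ T` of `H` (modelled as a linear map of vector spaces, `W = 𝔛(S) ⊗ ℚ`);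
* the nilpotent Lie algebra `L = 𝔲` of the maximal unipotent subgroup `U`, with its root
  space decomposition `𝔲 = ⨁_{α ∈ Δ₊} 𝔤_α`;
* the Lie algebra `𝔫 ⊆ 𝔲` of the unipotent radical `N = H ∩ U` of `H`, which is a
  subalgebra and is a sum of its `S`-weight components. -/
structure SphericalSetup (V : Type) [NormedAddCommGroup V] [InnerProductSpace ℝ V]
    (W : Type) [AddCommGroup W] [Module ℝ W]
    (L : Type) [LieRing L] [LieAlgebra ℂ L] extends RootSystemData V where
  /-- restriction of characters from `T` to `S` -/
  τ : V →ₗ[ℝ] W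
  /-- the root spaces `𝔤_α ⊆ 𝔲` -/
  g : V → Submodule ℂ L
  g_dim : ∀ α ∈ toRootSystemData.pos, Module.finrank ℂ (g α) = 1
  g_bot : ∀ α, α ∉ toRootSystemData.pos → g α = ⊥
  g_top : (⨆ α ∈ toRootSystemData.pos, g α) = (⊤ : Submodule ℂ L)
  bracket_mem : ∀ (α β : V), ∀ x ∈ g α, ∀ y ∈ g β, ⁅x, y⁆ ∈ g (α + β)
  bracket_ne : ∀ α ∈ toRootSystemData.pos, ∀ β ∈ toRootSystemData.pos,
    α + β ∈ toRootSystemData.pos → ∃ x ∈ g α, ∃ y ∈ g β, ⁅x, y⁆ ≠ (0 : L)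
  /-- the Lie algebra `𝔫` of the unipotent radical `N` of `H` -/
  n : Submodule ℂ L
  n_bracket : ∀ x ∈ n, ∀ y ∈ n, ⁅x, y⁆ ∈ n
  n_weight : n = ⨆ w : W, n ⊓ ⨆ α ∈ {a ∈ toRootSystemData.pos | τ a = w}, g α

namespace SphericalSetup

variable {V : Type} [NormedAddCommGroup V] [InnerProductSpace ℝ V]
  {W : Type} [AddCommGroup W] [Module ℝ W]
  {L : Type} [LieRing L] [LieAlgebra ℂ L]

/-- The `S`-weight subspace `𝔲_w ⊆ 𝔲` of weight `w`. -/
def uSp (S : SphericalSetup V W L) (w : W) : Submodule ℂ L :=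
  ⨆ α ∈ {a ∈ S.pos | S.τ a = w}, S.g α

/-- `c_w`: the codimension of `𝔫_w = 𝔫 ∩ 𝔲_w` in `𝔲_w`. -/
noncomputable def c (S : SphericalSetup V W L) (w : W) : ℕ :=
  Module.finrank ℂ (S.uSp w) - Module.finrank ℂ ↥(S.n ⊓ S.uSp w)

/-- The sphericity of `H` in `G`, via the criterion of Theorem `solvable_spherical`:
`c_w ≤ 1` for every weight `w`, and the weights `w` with `c_w = 1` are linearly
independent in `𝔛(S) ⊗ ℚ`. -/
def Spherical (S : SphericalSetup V W L) : Prop :=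
  (∀ w : W, S.c w ≤ 1) ∧
    LinearIndependent ℝ (fun w : {w : W // S.c w = 1} => (w : W))

/-- The set `Ψ` of active roots: positive roots `α` with `𝔤_α ⊄ 𝔫`. -/
def active (S : SphericalSetup V W L) : Set V :=
  {α ∈ S.pos | ¬ S.g α ≤ S.n}

/-- The family `F(α)` of active roots generated by an active root `α`: the root `α`
together with all active roots subordinate to it. -/
def family (S : SphericalSetup V W L) (α : V) : Set V :=
  insert α {β ∈ S.active | α - β ∈ S.pos}

end SphericalSetup

/-!
For an active root `α`, every decomposition `α = β + (α - β)` into positive roots has exactly one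
active summand: if both were passive, their bracket would put `𝔤_α` into `𝔫`; if both were
active, `τ β + τ (α - β) = τ α` would be a linear relation among weights with `c_w = 1`. So
`β ↦ α - β` exchanges active and passive summands, and there are `2 (|F(α)| - 1)` ordered
decompositions. On the root system side, reflecting in a simple root `δ` with `⟪α, δ⟫ > 0` and
inducting on the height shows that there are at least `2 |Supp α| - 2` of them, so
`|Supp α| ≤ |F(α)|`.

Conversely, `τ` is injective on `F(α)`. Two active roots `Y` and `Y + c` with the same weight
give, as `c_w ≤ 1`, a nonzero `u ∈ 𝔤_Y` and some `v ∈ 𝔤_{Y+c}` with `u + v ∈ 𝔫`; bracketing with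
a root vector of the passive root `c` pushes this along the infinite chain `Y + j c`. Two
distinct active `β₁, β₂` below `α` with the same weight reduce to this case through the active
root `β₂ + (α - β₁)`. So the `τ β` are distinct weights with `c_w = 1`, hence linearly
independent, and `F(α)` is a linearly independent subset of the span of `Supp α`. This gives
`|F(α)| ≤ |Supp α|`, and then (c).
-/

section LinearAlgebra

open Module Submodule

theorem LinearIndepOn.add_notMem {K M : Type*} [DivisionRing K] [AddCommGroup M] [Module K M]
    {s : Set M} (hs : LinearIndepOn K id s) {u v : M} (hu : u ∈ s) (hv : v ∈ s) :
    u + v ∉ s := by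
  intro huv
  have h0 : (0 : M) ∉ s := by simpa using hs.zero_notMem_image
  have hu' : u ∈ s \ {u + v} := ⟨hu, fun h => h0 (by rwa [left_eq_add.mp h] at hv)⟩
  have hv' : v ∈ s \ {u + v} := ⟨hv, fun h => h0 (by rwa [right_eq_add.mp h] at hu)⟩
  have hspan : u + v ∈ span K (s \ {u + v}) := add_mem (subset_span hu') (subset_span hv')
  have hins : insert (u + v) (s \ {u + v}) = s := by
    rw [Set.insert_sdiff_singleton, Set.insert_eq_of_mem huv]
  have hnot : u + v ∉ s \ {u + v} := fun h => h.2 rfl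
  exact ((hs.mono Set.sdiff_subset).notMem_span_iff_id.2 ⟨by rwa [hins], hnot⟩) hspan

section FiniteSpan

variable {K M : Type*} [DivisionRing K] [AddCommGroup M] [Module K M] {s : Set M} {t : Finset M}

theorem LinearIndepOn.finrank_span_eq_ncard (hs : LinearIndepOn K id s) (hfin : s.Finite) :
    finrank K (span K s) = s.ncard := by
  have := hfin.fintype
  rw [finrank_span_set_eq_card hs, Set.ncard_eq_toFinset_card']

theorem LinearIndepOn.ncard_le_card_of_subset_span (hs : LinearIndepOn K id s) (hfin : s.Finite)
    (hst : s ⊆ span K (t : Set M)) : s.ncard ≤ t.card :=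
  calc s.ncard = finrank K (span K s) := (hs.finrank_span_eq_ncard hfin).symm
    _ ≤ finrank K (span K (t : Set M)) := finrank_mono (span_le.2 hst)
    _ ≤ t.card := finrank_span_finset_le_card t

theorem LinearIndepOn.span_eq_of_subset_span_of_card_le (hs : LinearIndepOn K id s)
    (hfin : s.Finite) (hst : s ⊆ span K (t : Set M)) (hcard : t.card ≤ s.ncard) :
    span K s = span K t :=
  eq_of_le_of_finrank_le (span_le.2 hst) <|
    calc finrank K (span K (t : Set M)) ≤ t.card := finrank_span_finset_le_card t
      _ ≤ s.ncard := hcard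
      _ = finrank K (span K s) := (hs.finrank_span_eq_ncard hfin).symm

end FiniteSpan

theorem Submodule.exists_add_mem_of_finrank_eq_one {K M : Type*} [Field K] [AddCommGroup M]
    [Module K M] [FiniteDimensional K M] {p q U N : Submodule K M} (hp : finrank K p = 1)
    (hq : finrank K q = 1) (hpU : p ≤ U) (hqU : q ≤ U)
    (hcodim : finrank K U ≤ finrank K (N ⊓ U : Submodule K M) + 1) (hqN : ¬q ≤ N) :
    ∃ x ∈ p, x ≠ 0 ∧ ∃ y ∈ q, x + y ∈ N := by
  obtain ⟨x, hx, hx0⟩ := (Submodule.ne_bot_iff p).1 (by rintro rfl; simp at hp)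
  by_cases hpq : p = q
  · exact ⟨x, hx, hx0, -x, hpq ▸ neg_mem hx, by simp⟩
  have hdisj : p ⊓ q = ⊥ := ((isAtom_iff_finrank_eq_one.2 hp).disjoint_of_ne
    (isAtom_iff_finrank_eq_one.2 hq) hpq).eq_bot
  have hpq2 : finrank K (p ⊔ q : Submodule K M) = 2 := by
    have := finrank_sup_add_finrank_inf_eq p q
    rw [hdisj, finrank_bot, hp, hq] at this
    omega
  have hmeet : (N ⊓ U) ⊓ (p ⊔ q) ≠ ⊥ := by
    intro hbot
    have hsum := finrank_sup_add_finrank_inf_eq (N ⊓ U) (p ⊔ q)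
    have hle := finrank_mono (sup_le inf_le_right (sup_le hpU hqU) : (N ⊓ U) ⊔ (p ⊔ q) ≤ U)
    rw [hbot, finrank_bot, hpq2] at hsum
    omega
  obtain ⟨z, hz, hz0⟩ := (Submodule.ne_bot_iff _).1 hmeet
  obtain ⟨⟨hzN, -⟩, hzpq⟩ := hz
  obtain ⟨x, hx, y, hy, rfl⟩ := mem_sup.1 hzpq
  refine ⟨x, hx, fun hx0 => hqN ?_, y, hy, hzN⟩
  subst hx0
  rw [zero_add] at hzN hz0
  rw [eq_span_singleton_of_mem_of_finrank_eq_one hq hy hz0]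
  exact (span_singleton_le_iff_mem _ _).2 hzN

end LinearAlgebra

namespace RootSystemData

variable {V : Type} [NormedAddCommGroup V] [InnerProductSpace ℝ V] {R : RootSystemData V}
  {x y δ α : V}

open scoped Classical

-- Ordered decompositions; `(R.summands α).ncard = 2 * R.numDecomp α`, as `α = 2β` is no root.
def summands (R : RootSystemData V) (α : V) : Set V :=
  {β | β ∈ R.pos ∧ α - β ∈ R.pos}

lemma summands_finite (α : V) : (R.summands α).Finite :=
  R.finite.subset fun _ hβ => hβ.1.1

lemma coeff_eq_of_eq_sum (hx : x ∈ R.roots) {m : V → ℤ} (h : x = ∑ γ ∈ R.simples, m γ • γ) :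
    ∀ γ ∈ R.simples, R.coeff x γ = m γ := by
  intro γ hγ
  have hli := linearIndepOn_finset_iff.1
    (show LinearIndepOn ℝ id (R.simples : Set V) from R.simples_indep)
  have := hli (fun γ => ((R.coeff x γ - m γ : ℤ) : ℝ)) ?_ γ hγ
  · exact_mod_cast sub_eq_zero.1 (by exact_mod_cast this)
  · simp only [id, Int.cast_sub, sub_smul, Finset.sum_sub_distrib, Int.cast_smul_eq_zsmul]
    rw [← R.coeff_spec x hx, ← h, sub_self]

lemma coeff_neg (hx : x ∈ R.roots) : ∀ γ ∈ R.simples, R.coeff (-x) γ = -R.coeff x γ := by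
  refine coeff_eq_of_eq_sum (R.neg_mem x hx) ?_
  conv_lhs => rw [R.coeff_spec x hx]
  simp only [neg_zsmul, Finset.sum_neg_distrib]

lemma coeff_add (hx : x ∈ R.roots) (hy : y ∈ R.roots) (hxy : x + y ∈ R.roots) :
    ∀ γ ∈ R.simples, R.coeff (x + y) γ = R.coeff x γ + R.coeff y γ := by
  refine coeff_eq_of_eq_sum hxy ?_
  conv_lhs => rw [R.coeff_spec x hx, R.coeff_spec y hy]
  simp only [add_zsmul, Finset.sum_add_distrib]

lemma coeff_simple (hδ : δ ∈ R.simples) :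
    ∀ γ ∈ R.simples, R.coeff δ γ = if γ = δ then 1 else 0 := by
  refine coeff_eq_of_eq_sum (R.simples_mem δ hδ) ?_
  simp [ite_smul, hδ]

lemma coeff_sub_smul_simple (hδ : δ ∈ R.simples) (hx : x ∈ R.roots) (m : ℤ)
    (hy : x - (m : ℝ) • δ ∈ R.roots) :
    ∀ γ ∈ R.simples, R.coeff (x - (m : ℝ) • δ) γ = R.coeff x γ - if γ = δ then m else 0 := by
  refine coeff_eq_of_eq_sum hy ?_
  conv_lhs => rw [R.coeff_spec x hx]
  simp only [sub_smul, ite_smul, zero_smul, Finset.sum_sub_distrib, Finset.sum_ite_eq',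
    if_pos hδ, Int.cast_smul_eq_zsmul]

lemma pos_or_neg_mem_pos (hx : x ∈ R.roots) : x ∈ R.pos ∨ -x ∈ R.pos := by
  refine (R.coeff_sign x hx).imp (fun h => ⟨hx, h⟩) fun h => ⟨R.neg_mem x hx, fun γ hγ => ?_⟩
  rw [coeff_neg hx γ hγ]
  exact neg_nonneg.2 (h γ hγ)

lemma zero_notMem_pos : (0 : V) ∉ R.pos := fun h => R.ne_zero 0 h.1 rfl

lemma neg_notMem_pos (hx : x ∈ R.pos) : -x ∉ R.pos := by
  intro hnx
  refine R.ne_zero x hx.1 ?_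
  rw [R.coeff_spec x hx.1]
  refine Finset.sum_eq_zero fun γ hγ => ?_
  have := hnx.2 γ hγ
  rw [coeff_neg hx.1 γ hγ] at this
  rw [le_antisymm (by omega) (hx.2 γ hγ), zero_smul]

lemma simple_mem_pos (hδ : δ ∈ R.simples) : δ ∈ R.pos :=
  ⟨R.simples_mem δ hδ, fun γ hγ => by rw [coeff_simple hδ γ hγ]; split_ifs <;> omega⟩

lemma Supp_simple (hδ : δ ∈ R.simples) : R.Supp δ = {δ} := by
  ext γ
  simp only [Supp, Finset.mem_filter, Finset.mem_singleton]
  constructor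
  · rintro ⟨hγ, h⟩
    by_contra hne
    exact h (by rw [coeff_simple hδ γ hγ, if_neg hne])
  · rintro rfl
    exact ⟨hδ, by rw [coeff_simple hδ γ hδ, if_pos rfl]; omega⟩

lemma mem_span_Supp (hx : x ∈ R.roots) : x ∈ Submodule.span ℝ (R.Supp x : Set V) := by
  have hsum : ∑ γ ∈ R.Supp x, R.coeff x γ • γ = x := by
    rw [Supp, Finset.sum_filter_of_ne, ← R.coeff_spec x hx]
    intro γ _ h hc
    rw [hc, zero_smul] at h
    exact h rfl
  have hmem : ∑ γ ∈ R.Supp x, R.coeff x γ • γ ∈ Submodule.span ℝ (R.Supp x : Set V) :=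
    Submodule.sum_mem _ fun γ hγ => zsmul_mem (Submodule.subset_span hγ) _
  rwa [hsum] at hmem

lemma Supp_subset_of_mem_summands {α β : V} (hβ : β ∈ R.summands α) (hα : α ∈ R.roots) :
    R.Supp β ⊆ R.Supp α := by
  intro γ hγ
  obtain ⟨hγs, hγβ⟩ := Finset.mem_filter.1 hγ
  have hsum : β + (α - β) = α := add_sub_cancel β α
  have := coeff_add hβ.1.1 hβ.2.1 (by rwa [hsum]) γ hγs
  rw [hsum] at this
  refine Finset.mem_filter.2 ⟨hγs, ?_⟩
  have := hβ.1.2 γ hγs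
  have := hβ.2.2 γ hγs
  omega

lemma eq_one_of_zsmul_mem_roots (hδ : δ ∈ R.roots) {m : ℤ} (hm : 0 < m) (h : m • δ ∈ R.roots) :
    m = 1 := by
  obtain ⟨k, hk⟩ := R.cartan_int _ h δ hδ
  have hδδ : ⟪δ, δ⟫_ℝ ≠ 0 := inner_self_ne_zero.2 (R.ne_zero δ hδ)
  have hm0 : (m : ℝ) ≠ 0 := by exact_mod_cast hm.ne'
  rw [← Int.cast_smul_eq_zsmul ℝ, real_inner_smul_left, real_inner_smul_left,
    real_inner_smul_right] at hk
  have hkm : 2 = m * k := by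
    field_simp at hk
    exact_mod_cast hk
  have hm2 : m ≤ 2 := Int.le_of_dvd two_pos ⟨k, hkm⟩
  interval_cases m
  · rfl
  · exact absurd (by simpa [two_smul, two_zsmul] using h) (R.reduced δ hδ)

lemma exists_coeff_pos_of_ne_simple (hx : x ∈ R.pos) (hδ : δ ∈ R.simples) (hxδ : x ≠ δ) :
    ∃ γ ∈ R.simples, γ ≠ δ ∧ 0 < R.coeff x γ := by
  by_contra! h
  have hx_eq : x = R.coeff x δ • δ := by
    conv_lhs => rw [R.coeff_spec x hx.1]
    refine Finset.sum_eq_single_of_mem δ hδ fun γ hγ hne => ?_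
    rw [le_antisymm (h γ hγ hne) (hx.2 γ hγ), zero_smul]
  have hpos : 0 < R.coeff x δ := by
    refine (hx.2 δ hδ).lt_of_ne fun h0 => R.ne_zero x hx.1 ?_
    rw [hx_eq, ← h0, zero_smul]
  have h1 := eq_one_of_zsmul_mem_roots (R.simples_mem δ hδ) hpos (hx_eq ▸ hx.1)
  exact hxδ (by rw [hx_eq, h1, one_smul])

lemma sub_smul_simple_mem_pos (hx : x ∈ R.pos) (hδ : δ ∈ R.simples) (hxδ : x ≠ δ) (m : ℤ)
    (hy : x - (m : ℝ) • δ ∈ R.roots) : x - (m : ℝ) • δ ∈ R.pos := by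
  obtain ⟨γ, hγ, hγδ, hcoeff⟩ := exists_coeff_pos_of_ne_simple hx hδ hxδ
  refine ⟨hy, (R.coeff_sign _ hy).resolve_right fun h => ?_⟩
  have := h γ hγ
  rw [coeff_sub_smul_simple hδ hx.1 m hy γ hγ, if_neg hγδ] at this
  omega

lemma sub_mem_roots_of_inner_pos (hx : x ∈ R.roots) (hy : y ∈ R.roots) (hxy : x ≠ y)
    (hip : 0 < ⟪x, y⟫_ℝ) : x - y ∈ R.roots := by
  obtain ⟨n₁, hn₁⟩ := R.cartan_int x hx y hy
  obtain ⟨n₂, hn₂⟩ := R.cartan_int y hy x hx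
  rw [real_inner_comm] at hn₂
  have hxx : 0 < ⟪x, x⟫_ℝ := real_inner_self_pos.2 (R.ne_zero x hx)
  have hyy : 0 < ⟪y, y⟫_ℝ := real_inner_self_pos.2 (R.ne_zero y hy)
  have hn₁pos : 0 < n₁ := by exact_mod_cast (hn₁ ▸ by positivity : (0 : ℝ) < n₁)
  have hn₂pos : 0 < n₂ := by exact_mod_cast (hn₂ ▸ by positivity : (0 : ℝ) < n₂)
  -- if both Cartan integers were `≥ 2`, then `‖x - y‖² = ‖x‖² + ‖y‖² - 2⟪x, y⟫ ≤ 0`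
  have hone : n₁ = 1 ∨ n₂ = 1 := by
    by_contra! hne
    have h₁ : (2 : ℝ) ≤ n₁ := by exact_mod_cast (show 2 ≤ n₁ by omega)
    have h₂ : (2 : ℝ) ≤ n₂ := by exact_mod_cast (show 2 ≤ n₂ by omega)
    rw [← hn₁, le_div_iff₀ hxx] at h₁
    rw [← hn₂, le_div_iff₀ hyy] at h₂
    have : ⟪x - y, x - y⟫_ℝ ≤ 0 := by
      rw [real_inner_sub_sub_self]
      linarith
    exact hxy (sub_eq_zero.1 (real_inner_self_nonpos.1 this))
  rcases hone with h | h
  · have := R.neg_mem _ (R.reflect_mem x hx y hy)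
    rwa [hn₁, h, Int.cast_one, one_smul, neg_sub] at this
  · have := R.reflect_mem y hy x hx
    rwa [real_inner_comm, hn₂, h, Int.cast_one, one_smul] at this

lemma exists_simple_inner_pos (hx : x ∈ R.pos) : ∃ δ ∈ R.simples, 0 < ⟪x, δ⟫_ℝ := by
  have hxx : 0 < ⟪x, x⟫_ℝ := real_inner_self_pos.2 (R.ne_zero x hx.1)
  have hsum := congrArg (⟪x, ·⟫_ℝ) (R.coeff_spec x hx.1)
  simp only [inner_sum, ← Int.cast_smul_eq_zsmul ℝ, real_inner_smul_right] at hsum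
  obtain ⟨γ, hγ, hpos⟩ := Finset.exists_lt_of_sum_lt (f := fun _ => (0 : ℝ))
    (g := fun γ => (R.coeff x γ : ℝ) * ⟪x, γ⟫_ℝ) (by rwa [Finset.sum_const_zero, ← hsum])
  exact ⟨γ, hγ, pos_of_mul_pos_right hpos (by exact_mod_cast hx.2 γ hγ)⟩

lemma height_nonneg (hx : x ∈ R.pos) : 0 ≤ R.height x :=
  Finset.sum_nonneg hx.2

lemma height_sub_smul_simple (hδ : δ ∈ R.simples) (hx : x ∈ R.roots) (m : ℤ)
    (hy : x - (m : ℝ) • δ ∈ R.roots) : R.height (x - (m : ℝ) • δ) = R.height x - m := by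
  rw [height, Finset.sum_congr rfl (coeff_sub_smul_simple hδ hx m hy), Finset.sum_sub_distrib,
    Finset.sum_ite_eq', if_pos hδ, height]

lemma Supp_subset_insert_Supp_sub_smul_simple (hδ : δ ∈ R.simples) (hx : x ∈ R.roots) (m : ℤ)
    (hy : x - (m : ℝ) • δ ∈ R.roots) : R.Supp x ⊆ insert δ (R.Supp (x - (m : ℝ) • δ)) := by
  intro γ hγ
  obtain ⟨hγs, hγx⟩ := Finset.mem_filter.1 hγ
  refine (eq_or_ne γ δ).elim (fun h => h ▸ Finset.mem_insert_self _ _) fun hne => ?_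
  refine Finset.mem_insert_of_mem (Finset.mem_filter.2 ⟨hγs, ?_⟩)
  rwa [coeff_sub_smul_simple hδ hx m hy γ hγs, if_neg hne, sub_zero]

noncomputable def coroot (δ : V) : Module.Dual ℝ V :=
  (2 / ⟪δ, δ⟫_ℝ) • innerₛₗ ℝ δ

lemma coroot_apply (δ v : V) : coroot δ v = 2 * ⟪δ, v⟫_ℝ / ⟪δ, δ⟫_ℝ := by
  simp [coroot, div_mul_eq_mul_div]

lemma coroot_self (hδ : δ ≠ 0) : coroot δ δ = 2 := by
  rw [coroot_apply, mul_div_assoc, div_self (inner_self_ne_zero.2 hδ), mul_one]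

lemma exists_reflection_eq_sub_smul (hδ : δ ∈ R.roots) (h : coroot δ δ = 2) {v : V}
    (hv : v ∈ R.roots) :
    ∃ n : ℤ, coroot δ v = n ∧ Module.reflection h v = v - (n : ℝ) • δ ∧
      Module.reflection h v ∈ R.roots := by
  obtain ⟨n, hn⟩ := R.cartan_int δ hδ v hv
  have hrefl : Module.reflection h v = v - (n : ℝ) • δ := by
    rw [Module.reflection_apply, coroot_apply, hn]
  exact ⟨n, (coroot_apply δ v).trans hn, hrefl, hrefl ▸ hn ▸ R.reflect_mem δ hδ v hv⟩

lemma reflection_mem_pos (hδ : δ ∈ R.simples) (h : coroot δ δ = 2) {v : V} (hv : v ∈ R.pos)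
    (hvδ : v ≠ δ) : Module.reflection h v ∈ R.pos := by
  obtain ⟨n, -, hrefl, hroot⟩ := exists_reflection_eq_sub_smul (R.simples_mem δ hδ) h hv.1
  rw [hrefl] at hroot ⊢
  exact sub_smul_simple_mem_pos hv hδ hvδ n hroot

lemma ncard_summands_reflection_sdiff_add_two_le (hδ : δ ∈ R.simples) (h : coroot δ δ = 2)
    (hα : α ∈ R.pos) (hαδ : α - δ ∈ R.pos) :
    (R.summands (Module.reflection h α) \ {δ, Module.reflection h α - δ}).ncard + 2 ≤
      (R.summands α).ncard := by
  set s := Module.reflection h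
  set β := s α
  have hδpos := simple_mem_pos hδ
  have hss : ∀ v, s (s v) = v := Module.involutive_reflection h
  have hmaps : Set.MapsTo s (R.summands β \ {δ, β - δ}) (R.summands α \ {δ, α - δ}) := by
    rintro v ⟨⟨hv, hβv⟩, hvE⟩
    simp only [Set.mem_insert_iff, Set.mem_singleton_iff, not_or] at hvE
    have hβvδ : β - v ≠ δ := fun e => hvE.2 (by rw [← e, sub_sub_cancel])
    have hsub : α - s v = s (β - v) := by rw [map_sub, hss]
    refine ⟨⟨reflection_mem_pos hδ h hv hvE.1, hsub ▸ reflection_mem_pos hδ h hβv hβvδ⟩, ?_⟩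
    simp only [Set.mem_insert_iff, Set.mem_singleton_iff, not_or]
    refine ⟨fun e => ?_, fun e => ?_⟩
    · have : v = -δ := by rw [← hss v, e, Module.reflection_apply_self]
      exact neg_notMem_pos hδpos (this ▸ hv)
    · have : β - v = -δ := by rw [← hss v, e, map_sub, Module.reflection_apply_self]; abel
      exact neg_notMem_pos hδpos (this ▸ hβv)
  have hpair : {δ, α - δ} ⊆ R.summands α := by
    rintro v (rfl | rfl)
    · exact ⟨hδpos, hαδ⟩
    · exact ⟨hαδ, by rwa [sub_sub_cancel]⟩
  have hne : δ ≠ α - δ := fun e => R.reduced δ hδpos.1 <| by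
    rw [two_smul, eq_sub_iff_add_eq.1 e]
    exact hα.1
  calc _ + 2 ≤ (R.summands α \ {δ, α - δ}).ncard + ({δ, α - δ} : Set V).ncard := by
        rw [Set.ncard_pair hne]
        exact Nat.add_le_add_right (Set.ncard_le_ncard_of_injOn s hmaps s.injective.injOn
          ((summands_finite α).subset Set.sdiff_subset)) 2
    _ = _ := Set.ncard_sdiff_add_ncard_of_subset hpair (summands_finite α)

lemma exists_sub_smul_simple_mem_pos_ncard_summands_le (hα : α ∈ R.pos)
    (hk : 1 < (R.Supp α).card) :
    ∃ δ ∈ R.simples, ∃ n : ℤ, 0 < n ∧ α - (n : ℝ) • δ ∈ R.pos ∧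
      (R.summands (α - (n : ℝ) • δ) \ {δ, α - (n : ℝ) • δ - δ}).ncard + 2 ≤
        (R.summands α).ncard := by
  obtain ⟨δ, hδ, hip⟩ := exists_simple_inner_pos hα
  have hδroot := R.simples_mem δ hδ
  have hαδ : α ≠ δ := by
    rintro rfl
    simp [Supp_simple hδ] at hk
  have hαδpos : α - δ ∈ R.pos := by
    simpa using sub_smul_simple_mem_pos hα hδ hαδ 1
      (by simpa using sub_mem_roots_of_inner_pos hα.1 hδroot hαδ hip)
  have h2 := coroot_self (R.ne_zero δ hδroot)
  obtain ⟨n, hn, hrefl, -⟩ := exists_reflection_eq_sub_smul hδroot h2 hα.1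
  have hn1 : (0 : ℝ) < n := by
    rw [← hn, coroot_apply, real_inner_comm]
    exact div_pos (by linarith) (real_inner_self_pos.2 (R.ne_zero δ hδroot))
  refine ⟨δ, hδ, n, by exact_mod_cast hn1, hrefl ▸ reflection_mem_pos hδ h2 hα hαδ, ?_⟩
  simpa only [hrefl] using ncard_summands_reflection_sdiff_add_two_le hδ h2 hα hαδpos

theorem two_mul_card_Supp_le_ncard_summands_add_two {α : V} (hα : α ∈ R.pos) :
    2 * (R.Supp α).card ≤ (R.summands α).ncard + 2 := by
  by_cases hk : (R.Supp α).card ≤ 1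
  · omega
  obtain ⟨δ, hδ, n, hn, hβ, hcount⟩ :=
    exists_sub_smul_simple_mem_pos_ncard_summands_le hα (by omega)
  have hheight := height_sub_smul_simple hδ hα.1 n hβ.1
  have hSupp := Supp_subset_insert_Supp_sub_smul_simple hδ hα.1 n hβ.1
  have hIH := two_mul_card_Supp_le_ncard_summands_add_two hβ
  set β := α - (n : ℝ) • δ
  by_cases hδβ : δ ∈ R.summands β
  · have hδSupp : δ ∈ R.Supp β :=
      Supp_subset_of_mem_summands hδβ hβ.1 (by simp [Supp_simple hδ])
    have hcard : (R.Supp α).card ≤ (R.Supp β).card := by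
      simpa [Finset.insert_eq_of_mem hδSupp] using Finset.card_le_card hSupp
    have hsdiff := Set.ncard_le_ncard_sdiff_add_ncard (R.summands β) {δ, β - δ}
    have hpair : ({δ, β - δ} : Set V).ncard ≤ 2 :=
      (Set.ncard_insert_le _ _).trans (by simp)
    omega
  · have hcard : (R.Supp α).card ≤ (R.Supp β).card + 1 :=
      (Finset.card_le_card hSupp).trans (Finset.card_insert_le _ _)
    have hsdiff : (R.summands β).ncard ≤ (R.summands β \ {δ, β - δ}).ncard := by
      refine Set.ncard_le_ncard (fun v hv => ⟨hv, ?_⟩) ((summands_finite β).subset Set.sdiff_subset)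
      rintro (rfl | rfl)
      · exact hδβ hv
      · exact hδβ ⟨by simpa using hv.2, hv.1⟩
    omega
termination_by (R.height α).toNat
decreasing_by have := height_nonneg hβ; omega

lemma exists_add_nsmul_notMem_roots (R : RootSystemData V) {c : V} (hc : c ≠ 0) (Y : V) :
    ∃ j : ℕ, Y + j • c ∉ R.roots := by
  by_contra! h
  have : IsAddTorsionFree V := IsAddTorsionFree.of_isTorsionFree ℝ V
  exact (infinite_range_add_nsmul_iff Y c).2 hc (R.finite.subset (Set.range_subset_iff.2 h))

end RootSystemData

namespace SphericalSetup

variable {V : Type} [NormedAddCommGroup V] [InnerProductSpace ℝ V]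
  {W : Type} [AddCommGroup W] [Module ℝ W]
  {L : Type} [LieRing L] [LieAlgebra ℂ L] {S : SphericalSetup V W L} {a b α β₁ β₂ : V} {x y : L}

open RootSystemData

lemma g_le_of_mem (ha : a ∈ S.pos) (hx : x ∈ S.g a) (hx0 : x ≠ 0) {q : Submodule ℂ L}
    (hxq : x ∈ q) : S.g a ≤ q := by
  rw [eq_span_singleton_of_mem_of_finrank_eq_one (S.g_dim a ha) hx hx0]
  exact (Submodule.span_singleton_le_iff_mem _ _).2 hxq

lemma exists_ne_zero_mem_g (ha : a ∈ S.pos) : ∃ x ∈ S.g a, x ≠ 0 :=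
  (Submodule.ne_bot_iff _).1 fun h => by
    have := S.g_dim a ha
    rw [h, finrank_bot] at this
    exact zero_ne_one this

lemma mem_pos_of_mem_g (hx : x ∈ S.g a) (hx0 : x ≠ 0) : a ∈ S.pos := by
  by_contra h
  rw [S.g_bot a h, Submodule.mem_bot] at hx
  exact hx0 hx

lemma lie_ne_zero (ha : a ∈ S.pos) (hb : b ∈ S.pos) (hab : a + b ∈ S.pos) (hx : x ∈ S.g a)
    (hx0 : x ≠ 0) (hy : y ∈ S.g b) (hy0 : y ≠ 0) : ⁅x, y⁆ ≠ 0 := by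
  obtain ⟨x', hx', y', hy', hne⟩ := S.bracket_ne a ha b hb hab
  rw [eq_span_singleton_of_mem_of_finrank_eq_one (S.g_dim a ha) hx hx0,
    Submodule.mem_span_singleton] at hx'
  rw [eq_span_singleton_of_mem_of_finrank_eq_one (S.g_dim b hb) hy hy0,
    Submodule.mem_span_singleton] at hy'
  obtain ⟨c, rfl⟩ := hx'
  obtain ⟨d, rfl⟩ := hy'
  intro h
  exact hne (by rw [smul_lie, lie_smul, h, smul_zero, smul_zero])

lemma g_le_n_of_notMem_active (ha : a ∉ S.active) : S.g a ≤ S.n := by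
  by_cases hpos : a ∈ S.pos
  · exact not_not.1 fun h => ha ⟨hpos, h⟩
  · rw [S.g_bot a hpos]
    exact bot_le

lemma eq_zero_of_mem_g_of_mem_n (ha : a ∈ S.active) (hx : x ∈ S.g a) (hxn : x ∈ S.n) :
    x = 0 :=
  not_not.1 fun hx0 => ha.2 (g_le_of_mem ha.1 hx hx0 hxn)

lemma mem_active_or_mem_active_of_add_mem_active (ha : a ∈ S.pos) (hb : b ∈ S.pos)
    (hab : a + b ∈ S.active) : a ∈ S.active ∨ b ∈ S.active := by
  by_contra! h
  obtain ⟨x, hx, y, hy, hne⟩ := S.bracket_ne a ha b hb hab.1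
  exact hne (eq_zero_of_mem_g_of_mem_n hab (S.bracket_mem a b x hx y hy)
    (S.n_bracket x (g_le_n_of_notMem_active h.1 hx) y (g_le_n_of_notMem_active h.2 hy)))

lemma g_le_uSp (ha : a ∈ S.pos) {w : W} (hw : S.τ a = w) : S.g a ≤ S.uSp w :=
  le_iSup₂_of_le (f := fun a (_ : a ∈ {a ∈ S.pos | S.τ a = w}) => S.g a) a ⟨ha, hw⟩ le_rfl

lemma family_subset_active (hα : α ∈ S.active) : S.family α ⊆ S.active := by
  rintro β (rfl | hβ)
  exacts [hα, hβ.1]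

lemma family_finite (S : SphericalSetup V W L) (α : V) : (S.family α).Finite :=
  (S.finite.subset fun _ hβ => hβ.1.1.1).insert α

lemma family_subset_span_Supp (hα : α ∈ S.pos) :
    S.family α ⊆ Submodule.span ℝ (S.Supp α : Set V) := by
  rintro β (rfl | ⟨hβ, hαβ⟩)
  · exact mem_span_Supp hα.1
  · exact Submodule.span_mono (by exact_mod_cast Supp_subset_of_mem_summands ⟨hβ.1, hαβ⟩ hα.1)
      (mem_span_Supp hβ.1.1)

variable [FiniteDimensional ℂ L]

lemma c_τ_eq_one (hS : S.Spherical) (ha : a ∈ S.active) : S.c (S.τ a) = 1 := by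
  have hlt : Module.finrank ℂ (S.n ⊓ S.uSp (S.τ a) : Submodule ℂ L) <
      Module.finrank ℂ (S.uSp (S.τ a)) :=
    Submodule.finrank_lt_finrank_of_lt <| inf_le_right.lt_of_ne fun h =>
      ha.2 ((g_le_uSp ha.1 rfl).trans (h ▸ inf_le_left))
  have := hS.1 (S.τ a)
  unfold c at this ⊢
  omega

lemma notMem_active_of_add_mem_active (hS : S.Spherical) (ha : a ∈ S.active)
    (hab : a + b ∈ S.active) : b ∉ S.active := fun hb =>
  (show LinearIndepOn ℝ id {w | S.c w = 1} from hS.2).add_notMem (c_τ_eq_one hS ha)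
    (c_τ_eq_one hS hb) (show S.c (S.τ a + S.τ b) = 1 by rw [← map_add]; exact c_τ_eq_one hS hab)

lemma mem_active_iff_sub_notMem_active (hS : S.Spherical) (hα : α ∈ S.active) {β : V}
    (hβ : β ∈ S.summands α) : β ∈ S.active ↔ α - β ∉ S.active := by
  have hsum : β + (α - β) = α := add_sub_cancel β α
  refine ⟨fun h => notMem_active_of_add_mem_active hS h (by rwa [hsum]), fun h => ?_⟩
  exact (mem_active_or_mem_active_of_add_mem_active hβ.1 hβ.2 (by rwa [hsum])).resolve_right h

theorem ncard_summands_eq_two_mul (hS : S.Spherical) (hα : α ∈ S.active) :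
    (S.summands α).ncard = 2 * {β ∈ S.active | α - β ∈ S.pos}.ncard := by
  set A := {β ∈ S.active | α - β ∈ S.pos}
  have hA : A ⊆ S.summands α := fun β hβ => ⟨hβ.1.1, hβ.2⟩
  have hcompl : S.summands α \ A = (fun β => α - β) '' A := by
    ext β
    constructor
    · rintro ⟨hβ, hβA⟩
      have hβ' : β ∉ S.active := fun h => hβA ⟨h, hβ.2⟩
      refine ⟨α - β, ⟨not_not.1 ((mem_active_iff_sub_notMem_active hS hα hβ).not.1 hβ'), ?_⟩,
        sub_sub_cancel α β⟩
      rw [sub_sub_cancel]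
      exact hβ.1
    · rintro ⟨γ, ⟨hγ, hαγ⟩, rfl⟩
      have hγ' : γ ∈ S.summands α := ⟨hγ.1, hαγ⟩
      refine ⟨⟨hαγ, by rw [sub_sub_cancel]; exact hγ.1⟩, fun h => ?_⟩
      exact (mem_active_iff_sub_notMem_active hS hα hγ').1 hγ h.1
  have hinj : Function.Injective fun β : V => α - β := sub_right_injective
  rw [← Set.ncard_sdiff_add_ncard_of_subset hA (summands_finite α), hcompl,
    Set.ncard_image_of_injective A hinj, two_mul]

lemma exists_add_mem_n_of_τ_eq (hS : S.Spherical) (h₁ : β₁ ∈ S.active) (h₂ : β₂ ∈ S.active)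
    (hτ : S.τ β₁ = S.τ β₂) : ∃ x₁ ∈ S.g β₁, x₁ ≠ 0 ∧ ∃ x₂ ∈ S.g β₂, x₁ + x₂ ∈ S.n := by
  have hc := hS.1 (S.τ β₁)
  unfold c at hc
  exact Submodule.exists_add_mem_of_finrank_eq_one (S.g_dim _ h₁.1) (S.g_dim _ h₂.1)
    (g_le_uSp h₁.1 rfl) (g_le_uSp h₂.1 hτ.symm) (by omega) h₂.2

theorem τ_ne_of_sub_mem_pos (hS : S.Spherical) {X Y : V} (hX : X ∈ S.active)
    (hY : Y ∈ S.active) (hXY : X - Y ∈ S.pos) : S.τ X ≠ S.τ Y := by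
  intro hτ
  set c := X - Y
  have hYc : Y + c = X := add_sub_cancel Y X
  have hcn : S.g c ≤ S.n :=
    g_le_n_of_notMem_active (notMem_active_of_add_mem_active hS hY (by rwa [hYc]))
  obtain ⟨y, hy, hy0⟩ := exists_ne_zero_mem_g hXY
  let P : V → Prop := fun Z =>
    Z + c ∈ S.active ∧ ∃ u ∈ S.g Z, u ≠ 0 ∧ ∃ v ∈ S.g (Z + c), u + v ∈ S.n
  have hstep : ∀ Z, P Z → P (Z + c) := by
    rintro Z ⟨hZc, u, hu, hu0, v, hv, huv⟩
    have hu' : ⁅u, y⁆ ∈ S.g (Z + c) := S.bracket_mem _ _ u hu y hy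
    have hv' : ⁅v, y⁆ ∈ S.g (Z + c + c) := S.bracket_mem _ _ v hv y hy
    have huv' : ⁅u, y⁆ + ⁅v, y⁆ ∈ S.n := by
      rw [← add_lie]
      exact S.n_bracket _ huv y (hcn hy)
    have hu'0 : ⁅u, y⁆ ≠ 0 := lie_ne_zero (mem_pos_of_mem_g hu hu0) hXY hZc.1 hu hu0 hy hy0
    have hv'n : ⁅v, y⁆ ∉ S.n := fun h =>
      hu'0 (eq_zero_of_mem_g_of_mem_n hZc hu' (by simpa using S.n.sub_mem huv' h))
    exact ⟨not_not.1 fun h => hv'n (g_le_n_of_notMem_active h hv'), _, hu', hu'0, _, hv', huv'⟩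
  have hchain : ∀ j : ℕ, P (Y + j • c) := by
    intro j
    induction j with
    | zero => simpa [P, hYc] using ⟨hX, exists_add_mem_n_of_τ_eq hS hY hX hτ.symm⟩
    | succ j ih =>
      rw [succ_nsmul, ← add_assoc]
      exact hstep _ ih
  obtain ⟨j, hj⟩ := S.exists_add_nsmul_notMem_roots (S.ne_zero c hXY.1) Y
  obtain ⟨-, u, hu, hu0, -⟩ := hchain j
  exact hj (mem_pos_of_mem_g hu hu0).1

lemma add_sub_mem_active (hS : S.Spherical) (hα : α ∈ S.active) (h₁ : β₁ ∈ S.active)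
    (h₂ : β₂ ∈ S.active) (hs₁ : α - β₁ ∈ S.pos) (hτ : S.τ β₁ = S.τ β₂) :
    β₂ + (α - β₁) ∈ S.active := by
  have hsum : β₁ + (α - β₁) = α := add_sub_cancel β₁ α
  obtain ⟨y, hy, hy0⟩ := exists_ne_zero_mem_g hs₁
  have hyn : y ∈ S.n :=
    g_le_n_of_notMem_active (notMem_active_of_add_mem_active hS h₁ (by rwa [hsum])) hy
  obtain ⟨x₁, hx₁, hx₁0, x₂, hx₂, hx₁₂⟩ := exists_add_mem_n_of_τ_eq hS h₁ h₂ hτ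
  have h₁y : ⁅x₁, y⁆ ∈ S.g α := hsum ▸ S.bracket_mem _ _ x₁ hx₁ y hy
  have h₁y0 : ⁅x₁, y⁆ ≠ 0 := lie_ne_zero h₁.1 hs₁ (by rw [hsum]; exact hα.1) hx₁ hx₁0 hy hy0
  by_contra h
  have h₂y : ⁅x₂, y⁆ ∈ S.n := g_le_n_of_notMem_active h (S.bracket_mem _ _ x₂ hx₂ y hy)
  have h₁₂y : ⁅x₁, y⁆ + ⁅x₂, y⁆ ∈ S.n := by
    rw [← add_lie]
    exact S.n_bracket _ hx₁₂ y hyn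
  exact h₁y0 (eq_zero_of_mem_g_of_mem_n hα h₁y (by simpa using S.n.sub_mem h₁₂y h₂y))

lemma τ_ne_of_inner_pos (hS : S.Spherical) (hα : α ∈ S.active) (h₁ : β₁ ∈ S.active)
    (h₂ : β₂ ∈ S.active) (hne : β₁ ≠ β₂) (hs₁ : α - β₁ ∈ S.pos)
    (hip : 0 < ⟪α, β₂ + (α - β₁)⟫_ℝ) : S.τ β₁ ≠ S.τ β₂ := by
  intro hτ
  set δ := β₂ + (α - β₁)
  have hδ : δ ∈ S.active := add_sub_mem_active hS hα h₁ h₂ hs₁ hτ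
  have hτδ : S.τ δ = S.τ α := by
    simp only [δ, map_add, map_sub, hτ]
    abel
  have hαδ : α ≠ δ := fun e => hne (by simpa [δ] using congrArg (· - (α - β₁)) e)
  rcases pos_or_neg_mem_pos (sub_mem_roots_of_inner_pos hα.1.1 hδ.1.1 hαδ hip) with h | h
  · exact τ_ne_of_sub_mem_pos hS hα hδ h hτδ.symm
  · exact τ_ne_of_sub_mem_pos hS hδ hα (by rwa [neg_sub] at h) hτδ

lemma τ_ne_of_sub_mem_pos_of_sub_mem_pos (hS : S.Spherical) (hα : α ∈ S.active)
    (h₁ : β₁ ∈ S.active) (h₂ : β₂ ∈ S.active) (hne : β₁ ≠ β₂) (hs₁ : α - β₁ ∈ S.pos)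
    (hs₂ : α - β₂ ∈ S.pos) : S.τ β₁ ≠ S.τ β₂ := by
  have hαα : 0 < ⟪α, α⟫_ℝ := real_inner_self_pos.2 (S.ne_zero α hα.1.1)
  have hsum : ⟪α, β₂ + (α - β₁)⟫_ℝ + ⟪α, β₁ + (α - β₂)⟫_ℝ = 2 * ⟪α, α⟫_ℝ := by
    simp only [inner_add_right, inner_sub_right]
    ring
  rcases lt_or_ge 0 ⟪α, β₂ + (α - β₁)⟫_ℝ with hip | hip
  · exact τ_ne_of_inner_pos hS hα h₁ h₂ hne hs₁ hip
  · exact (τ_ne_of_inner_pos hS hα h₂ h₁ hne.symm hs₂ (by linarith)).symm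

theorem injOn_τ_family (hS : S.Spherical) (hα : α ∈ S.active) : Set.InjOn S.τ (S.family α) := by
  rintro β₁ (rfl | ⟨h₁, hs₁⟩) β₂ (rfl | ⟨h₂, hs₂⟩) hτ
  · rfl
  · exact absurd hτ (τ_ne_of_sub_mem_pos hS hα h₂ hs₂)
  · exact absurd hτ.symm (τ_ne_of_sub_mem_pos hS hα h₁ hs₁)
  · exact not_not.1 fun hne => τ_ne_of_sub_mem_pos_of_sub_mem_pos hS hα h₁ h₂ hne hs₁ hs₂ hτ

theorem linearIndepOn_τ_family (hS : S.Spherical) (hα : α ∈ S.active) :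
    LinearIndepOn ℝ S.τ (S.family α) :=
  ((show LinearIndepOn ℝ id {w | S.c w = 1} from hS.2).mono
    (Set.image_subset_iff.2 fun _ hβ => c_τ_eq_one hS (family_subset_active hα hβ))).comp_of_image
    (injOn_τ_family hS hα)

theorem card_Supp_le_ncard_family (hS : S.Spherical) (hα : α ∈ S.active) :
    (S.Supp α).card ≤ (S.family α).ncard := by
  have hα' : α ∉ {β ∈ S.active | α - β ∈ S.pos} := fun h => zero_notMem_pos (by simpa using h.2)
  have hcount := two_mul_card_Supp_le_ncard_summands_add_two hα.1
  rw [ncard_summands_eq_two_mul hS hα] at hcount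
  rw [family, Set.ncard_insert_of_notMem hα' ((S.family_finite α).subset (Set.subset_insert _ _))]
  omega

end SphericalSetup

open SphericalSetup

/-- Let `H` be a connected solvable spherical subgroup of `G` standardly embedded in `B`
and `α` an active root.  Then:
(a) `|F(α)| = |Supp α|`;
(b) the restricted weights `τ(β)`, `β ∈ F(α)`, are linearly independent;
(c) the linear span of `F(α)` equals the linear span of `Supp α`. -/
theorem family_card_weights_span
    {V : Type} [NormedAddCommGroup V] [InnerProductSpace ℝ V]
    {W : Type} [AddCommGroup W] [Module ℝ W]
    {L : Type} [LieRing L] [LieAlgebra ℂ L] [FiniteDimensional ℂ L]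
    (S : SphericalSetup V W L) (hS : S.Spherical)
    {α : V} (hα : α ∈ S.active) :
    (S.family α).ncard = (S.Supp α).card ∧
      LinearIndependent ℝ (fun β : S.family α => S.τ (β : V)) ∧
      Submodule.span ℝ (S.family α) = Submodule.span ℝ ((S.Supp α : Set V)) := by
  have hfin := S.family_finite α
  have hτ := linearIndepOn_τ_family hS hα
  have hli : LinearIndepOn ℝ id (S.family α) := LinearIndepOn.of_comp (v := id) S.τ hτ
  have hspan := family_subset_span_Supp hα.1
  have hcard : (S.family α).ncard = (S.Supp α).card :=
    (hli.ncard_le_card_of_subset_span hfin hspan).antisymm (card_Supp_le_ncard_family hS hα)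
  exact ⟨hcard, hτ, hli.span_eq_of_subset_span_of_card_le hfin hspan hcard.ge⟩
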